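/- arXiv:2106.10255 — 6 statements merged into one kernel-verified Lean document; each statement's English description precedes it below -/
import Mathlib

section
/- Fix 0 < p and σ₁,…,σ_n > 0, and define S_t = diag((1-t+tσ₁^{-p})^{-1/p}, …, (1-t+tσ_n^{-p})^{-1/p}) for t ∈ [0,1]. Then for each nonzero x ∈ ℝⁿ, the map t ↦ |S_t x|^{-p} is concave on [0,1]. -/
/-!
With `q = 2 / p` the function is `t ↦ M (a t)`, where `a t = (1 - t + t σₖ^(-p))ₖ` is affine in `t`
and `M a = (∑ xₖ² aₖ^(-q))^(-1/q)` is a weighted power mean of negative order. Such a mean is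
concave on the positive orthant: it is positively homogeneous of degree one, so its tangent
hyperplane at `w` is a linear functional agreeing with `M` at `w`, and the weighted Hölder
inequality shows that `M` lies below it everywhere.
-/

open Finset Real

theorem concaveOn_of_forall_le_affineMap {𝕜 E : Type*} [Field 𝕜] [LinearOrder 𝕜]
    [IsStrictOrderedRing 𝕜] [AddCommGroup E] [Module 𝕜 E] {s : Set E} {f : E → 𝕜}
    (hs : Convex 𝕜 s) (h : ∀ w ∈ s, ∃ g : E →ᵃ[𝕜] 𝕜, g w = f w ∧ ∀ a ∈ s, f a ≤ g a) :
    ConcaveOn 𝕜 s f := by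
  refine ⟨hs, fun a ha b hb l m hl hm hlm => ?_⟩
  obtain ⟨g, hgw, hg⟩ := h _ (hs ha hb hl hm hlm)
  calc l • f a + m • f b ≤ l • g a + m • g b := by
        simp only [smul_eq_mul]; gcongr <;> exact hg _ ‹_›
    _ = f (l • a + m • b) := by rw [← Convex.combo_affine_apply hlm, hgw]

theorem convex_setOf_forall_pos {ι : Type*} : Convex ℝ {a : ι → ℝ | ∀ i, 0 < a i} := by
  simpa [Set.pi] using convex_pi (s := Set.univ) fun (_ : ι) _ => convex_Ioi (0 : ℝ)

section PowerMean

variable {ι : Type*} [Fintype ι] {q : ℝ} {c a w : ι → ℝ}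

theorem sum_mul_rpow_neg_le (hq : 0 < q) (hc : ∀ i, 0 ≤ c i) (ha : ∀ i, 0 < a i)
    (hw : ∀ i, 0 < w i) :
    ∑ i, c i * w i ^ (-q) ≤
      (∑ i, c i * w i ^ (-(q + 1)) * a i) ^ (1 - (q + 1)⁻¹) *
        (∑ i, c i * a i ^ (-q)) ^ (q + 1)⁻¹ := by
  have hμ : ∀ i, 0 ≤ c i * w i ^ (-(q + 1)) * a i := fun i =>
    mul_nonneg (mul_nonneg (hc i) (rpow_nonneg (hw i).le _)) (ha i).le
  have hμf : ∀ i, c i * w i ^ (-(q + 1)) * a i * (w i / a i) = c i * w i ^ (-q) := fun i => by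
    have := (ha i).ne'; have := (hw i).ne'; have := (rpow_pos_of_pos (hw i) q).ne'
    rw [rpow_neg (hw i).le, rpow_neg (hw i).le, rpow_add_one (hw i).ne']
    field_simp
  have hμf' : ∀ i, c i * w i ^ (-(q + 1)) * a i * (w i / a i) ^ (q + 1) =
      c i * a i ^ (-q) := fun i => by
    rw [div_rpow (hw i).le (ha i).le, rpow_neg (hw i).le, rpow_neg (ha i).le,
      rpow_add_one (ha i).ne']
    have := (ha i).ne'; have := (rpow_pos_of_pos (hw i) (q + 1)).ne'
    field_simp
  simpa only [hμf, hμf'] using inner_le_weight_mul_Lp_of_nonneg univ (p := q + 1)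
    (by linarith) _ (fun i => w i / a i) hμ fun i => (div_pos (hw i) (ha i)).le

theorem sum_mul_rpow_neg_pos (hc : ∀ i, 0 ≤ c i) (hc0 : c ≠ 0) (ha : ∀ i, 0 < a i) :
    0 < ∑ i, c i * a i ^ (-q) := by
  obtain ⟨i, hi⟩ := Function.ne_iff.mp hc0
  exact sum_pos' (fun i _ => mul_nonneg (hc i) (rpow_nonneg (ha i).le _))
    ⟨i, mem_univ i, mul_pos ((hc i).lt_of_ne' hi) (rpow_pos_of_pos (ha i) _)⟩

/-- The right-hand side is the differential of the power mean at `w`, applied to `a`. -/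
theorem rpow_sum_mul_rpow_neg_le (hq : 0 < q) (hc : ∀ i, 0 ≤ c i) (hc0 : c ≠ 0)
    (ha : ∀ i, 0 < a i) (hw : ∀ i, 0 < w i) :
    (∑ i, c i * a i ^ (-q)) ^ (-(1 / q)) ≤
      (∑ i, c i * w i ^ (-q)) ^ (-((q + 1) / q)) * ∑ i, c i * w i ^ (-(q + 1)) * a i := by
  set A := ∑ i, c i * a i ^ (-q)
  set W := ∑ i, c i * w i ^ (-q)
  set T := ∑ i, c i * w i ^ (-(q + 1)) * a i
  have hA : 0 < A := sum_mul_rpow_neg_pos hc hc0 ha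
  have hW : 0 < W := sum_mul_rpow_neg_pos hc hc0 hw
  have hT : 0 ≤ T := sum_nonneg fun i _ =>
    mul_nonneg (mul_nonneg (hc i) (rpow_nonneg (hw i).le _)) (ha i).le
  have hraised : W ^ ((q + 1) / q) ≤ A ^ (1 / q) * T := by
    have := rpow_le_rpow hW.le (sum_mul_rpow_neg_le hq hc ha hw) (by positivity : 0 ≤ (q + 1) / q)
    rwa [mul_rpow (rpow_nonneg hT _) (rpow_nonneg hA.le _), ← rpow_mul hT, ← rpow_mul hA.le,
      show (1 - (q + 1)⁻¹) * ((q + 1) / q) = 1 by field_simp; ring,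
      show (q + 1)⁻¹ * ((q + 1) / q) = 1 / q by field_simp, rpow_one, mul_comm] at this
  rw [rpow_neg hA.le, rpow_neg hW.le, inv_mul_eq_div, le_div_iff₀ (rpow_pos_of_pos hW _),
    inv_mul_le_iff₀ (rpow_pos_of_pos hA _)]
  exact hraised

theorem concaveOn_rpow_sum_mul_rpow_neg (hq : 0 < q) (hc : ∀ i, 0 ≤ c i) :
    ConcaveOn ℝ {a : ι → ℝ | ∀ i, 0 < a i} fun a => (∑ i, c i * a i ^ (-q)) ^ (-(1 / q)) := by
  rcases eq_or_ne c 0 with rfl | hc0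
  · have h0 : (0 : ℝ) ^ (-(1 / q)) = 0 := zero_rpow (by simp [hq.ne'])
    simp only [Pi.zero_apply, zero_mul, sum_const_zero, h0]
    exact concaveOn_const 0 convex_setOf_forall_pos
  refine concaveOn_of_forall_le_affineMap convex_setOf_forall_pos fun w hw => ?_
  set W := ∑ i, c i * w i ^ (-q)
  refine ⟨(Fintype.linearCombination ℝ
    fun i => W ^ (-((q + 1) / q)) * (c i * w i ^ (-(q + 1)))).toAffineMap, ?_, fun a ha => ?_⟩
  · have hww : ∀ i, w i * (W ^ (-((q + 1) / q)) * (c i * w i ^ (-(q + 1)))) =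
        W ^ (-((q + 1) / q)) * (c i * w i ^ (-q)) := fun i => by
      rw [show -q = -(q + 1) + 1 by ring, rpow_add_one (hw i).ne']; ring
    simp only [LinearMap.coe_toAffineMap, Fintype.linearCombination_apply, smul_eq_mul, hww,
      ← mul_sum]
    rw [← rpow_add_one (sum_mul_rpow_neg_pos hc hc0 hw).ne']
    congr 1; field_simp; ring
  · simp only [LinearMap.coe_toAffineMap, Fintype.linearCombination_apply, smul_eq_mul]
    refine (rpow_sum_mul_rpow_neg_le hq hc hc0 ha hw).trans_eq ?_
    rw [mul_sum]
    exact sum_congr rfl fun i _ => by ring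

end PowerMean

theorem sqrt_sum_sq_rpow_mul_sq_rpow_neg {ι : Type*} [Fintype ι] {p : ℝ} (hp : 0 < p)
    {a : ι → ℝ} (ha : ∀ i, 0 < a i) (x : ι → ℝ) :
    √(∑ i, (a i ^ (-(1 / p))) ^ 2 * x i ^ 2) ^ (-p) =
      (∑ i, x i ^ 2 * a i ^ (-(2 / p))) ^ (-(1 / (2 / p))) := by
  have hterm : ∀ i, (a i ^ (-(1 / p))) ^ 2 * x i ^ 2 = x i ^ 2 * a i ^ (-(2 / p)) := fun i => by
    rw [← rpow_natCast, ← rpow_mul (ha i).le]; push_cast; ring_nf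
  rw [sum_congr rfl fun i _ => hterm i, sqrt_eq_rpow, ← rpow_mul (sum_nonneg fun i _ =>
    mul_nonneg (sq_nonneg _) (rpow_nonneg (ha i).le _))]
  congr 1; field_simp

theorem stmt_7_general (n : ℕ) (p : ℝ) (hp : 0 < p) (σ : Fin n → ℝ) (hσ : ∀ k, 0 < σ k)
    (x : Fin n → ℝ) :
    ConcaveOn ℝ (Set.Icc (0:ℝ) 1) (fun t : ℝ =>
      (Real.sqrt (∑ k, ((1 - t + t * σ k ^ (-p)) ^ (-(1/p))) ^ 2 * (x k) ^ 2)) ^ (-p)) := by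
  set d := AffineMap.lineMap (k := ℝ) (1 : Fin n → ℝ) fun k => σ k ^ (-p)
  have hd : ∀ t k, d t k = 1 - t + t * σ k ^ (-p) := fun t k => by
    simp [d, AffineMap.lineMap_apply_module]
  have hmaps : Set.MapsTo d (Set.Icc 0 1) {a | ∀ k, 0 < a k} :=
    convex_setOf_forall_pos.mapsTo_lineMap (fun _ => one_pos) fun k => rpow_pos_of_pos (hσ k) _
  have hF := concaveOn_rpow_sum_mul_rpow_neg (q := 2 / p) (by positivity) fun k => sq_nonneg (x k)
  refine ((hF.comp_affineMap d).subset hmaps (convex_Icc 0 1)).congr fun t ht => ?_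
  simp only [Function.comp_apply, hd]
  exact (sqrt_sum_sq_rpow_mul_sq_rpow_neg hp (fun k => hd t k ▸ hmaps ht k) x).symm

theorem stmt_7 (n : ℕ) (p : ℝ) (hp : 0 < p) (σ : Fin n → ℝ) (hσ : ∀ k, 0 < σ k)
    (x : Fin n → ℝ) (hx : x ≠ 0) :
    ConcaveOn ℝ (Set.Icc (0:ℝ) 1) (fun t : ℝ =>
      (Real.sqrt (∑ k, ((1 - t + t * σ k ^ (-p)) ^ (-(1/p))) ^ 2 * (x k) ^ 2)) ^ (-p)) :=
  stmt_7_general n p hp σ hσ x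
end

section
/- Let M be a real invertible n×n matrix (n ≥ 2) and set q = 2/(n-1). Then ‖M^{-1}‖_{q,n} ≤ ‖M‖_{2,n}^{n-1} / |det M|, where ‖A‖_{p,n} = ((1/n)·Σ_k σ_k(A)^p)^{1/p}. -/
open Matrix

/-- Singular values of a real square matrix: square roots of the eigenvalues of `Aᵀ * A`. -/
noncomputable def singularValues {n : ℕ} (A : Matrix (Fin n) (Fin n) ℝ) : Fin n → ℝ :=
  fun k => Real.sqrt ((show (Aᵀ * A).IsHermitian by
    rw [IsHermitian, conjTranspose_eq_transpose_of_trivial, transpose_mul, transpose_transpose]).eigenvalues k)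

/-- Normalized Schatten p-norm. -/
noncomputable def schattenNorm {n : ℕ} (p : ℝ) (A : Matrix (Fin n) (Fin n) ℝ) : ℝ :=
  ((1 / (n : ℝ)) * ∑ k, (singularValues A k) ^ p) ^ (1 / p)

/-! The singular values of `M⁻¹` are the reciprocals of those `σ₁, …, σₙ` of `M`, and
`P = ∏ σₖ = |det M|`, so `σₖ⁻¹ = (∏_{j ≠ k} σⱼ) / P`. With `q = 2 / (n - 1)`, AM-GM on the `n - 1`
numbers `σⱼ²`, `j ≠ k`, gives `σₖ^(-q) ≤ (∑_{j ≠ k} σⱼ²) / ((n - 1) P^q)`; summing over `k`, each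
`σⱼ²` is counted `n - 1` times, so `∑ₖ σₖ^(-q) ≤ (∑ₖ σₖ²) / P^q`. Raising this to the power
`1 / q = (n - 1) / 2` is the claim. -/

open Finset Polynomial

namespace Real

theorem prod_rpow_inv_card_le_sum_div_card {ι : Type*} (s : Finset ι) (hs : s.Nonempty)
    (z : ι → ℝ) (hz : ∀ i ∈ s, 0 ≤ z i) :
    (∏ i ∈ s, z i) ^ (#s : ℝ)⁻¹ ≤ (∑ i ∈ s, z i) / #s := by
  simpa using geom_mean_le_arith_mean s (fun _ ↦ 1) z (fun _ _ ↦ zero_le_one)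
    (by simpa using hs) hz

variable {ι : Type*} [Fintype ι] [DecidableEq ι] {σ : ι → ℝ}

theorem inv_rpow_le_sum_erase_sq_div_prod_rpow (hσ : ∀ i, 0 < σ i)
    (hcard : 1 < Fintype.card ι) (k : ι) :
    (σ k)⁻¹ ^ (2 / (Fintype.card ι - 1 : ℝ)) ≤
      (∑ j ∈ univ.erase k, σ j ^ 2) / (Fintype.card ι - 1) /
        (∏ j, σ j) ^ (2 / (Fintype.card ι - 1 : ℝ)) := by
  have hprod_nonneg (s : Finset ι) : 0 ≤ ∏ j ∈ s, σ j := prod_nonneg fun j _ ↦ (hσ j).le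
  have hcard_erase : (#(univ.erase k) : ℝ) = Fintype.card ι - 1 := by
    rw [card_erase_of_mem (mem_univ k), card_univ, Nat.cast_sub hcard.le, Nat.cast_one]
  have hinv : (σ k)⁻¹ = (∏ j ∈ univ.erase k, σ j) / ∏ j, σ j := by
    rw [← mul_prod_erase univ σ (mem_univ k),
      div_mul_cancel_right₀ (prod_ne_zero_iff.2 fun j _ ↦ (hσ j).ne')]
  have hnonempty : (univ.erase k).Nonempty := by
    rw [← card_pos, card_erase_of_mem (mem_univ k), card_univ]
    omega
  rw [hinv, div_rpow (hprod_nonneg _) (hprod_nonneg _)]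
  refine div_le_div_of_nonneg_right ?_ (rpow_nonneg (hprod_nonneg _) _)
  calc (∏ j ∈ univ.erase k, σ j) ^ (2 / (Fintype.card ι - 1 : ℝ))
      = (∏ j ∈ univ.erase k, σ j ^ 2) ^ (#(univ.erase k) : ℝ)⁻¹ := by
        rw [hcard_erase, prod_pow, ← rpow_natCast, ← rpow_mul (hprod_nonneg _)]
        norm_num [div_eq_mul_inv]
    _ ≤ (∑ j ∈ univ.erase k, σ j ^ 2) / (Fintype.card ι - 1) := by
        rw [← hcard_erase]
        exact prod_rpow_inv_card_le_sum_div_card _ hnonempty _ fun j _ ↦ sq_nonneg _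

theorem sum_inv_rpow_le_sum_sq_div_prod_rpow (hσ : ∀ i, 0 < σ i)
    (hcard : 1 < Fintype.card ι) :
    ∑ k, (σ k)⁻¹ ^ (2 / (Fintype.card ι - 1 : ℝ)) ≤
      (∑ k, σ k ^ 2) / (∏ k, σ k) ^ (2 / (Fintype.card ι - 1 : ℝ)) := by
  have hN : (0 : ℝ) < Fintype.card ι - 1 := by
    rw [sub_pos]
    exact_mod_cast hcard
  calc ∑ k, (σ k)⁻¹ ^ (2 / (Fintype.card ι - 1 : ℝ))
      ≤ ∑ k, (∑ j ∈ univ.erase k, σ j ^ 2) / (Fintype.card ι - 1) /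
          (∏ j, σ j) ^ (2 / (Fintype.card ι - 1 : ℝ)) :=
        sum_le_sum fun k _ ↦ inv_rpow_le_sum_erase_sq_div_prod_rpow hσ hcard k
    _ = (∑ k, σ k ^ 2) / (∏ k, σ k) ^ (2 / (Fintype.card ι - 1 : ℝ)) := by
        simp_rw [← sum_div, sum_erase_eq_sub (mem_univ _), sum_sub_distrib, sum_const,
          card_univ, nsmul_eq_mul]
        congr 1
        field_simp

end Real

variable {n : ℕ}

theorem singularValues_eq (A : Matrix (Fin n) (Fin n) ℝ) (k : Fin n) :
    singularValues A k = √((isHermitian_conjTranspose_mul_self A).eigenvalues k) := rfl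

theorem singularValues_nonneg (A : Matrix (Fin n) (Fin n) ℝ) (k : Fin n) :
    0 ≤ singularValues A k :=
  Real.sqrt_nonneg _

theorem prod_singularValues (A : Matrix (Fin n) (Fin n) ℝ) :
    ∏ k, singularValues A k = |A.det| := by
  have hdet := (isHermitian_conjTranspose_mul_self A).det_eq_prod_eigenvalues
  simp only [RCLike.ofReal_real_eq_id, id, det_mul, det_conjTranspose, star_trivial] at hdet
  simp only [singularValues_eq]
  rw [← Real.sqrt_prod univ fun k _ ↦ eigenvalues_conjTranspose_mul_self_nonneg A k, ← hdet,
    ← sq, Real.sqrt_sq_eq_abs]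

theorem singularValues_pos {A : Matrix (Fin n) (Fin n) ℝ} (hA : IsUnit A) (k : Fin n) :
    0 < singularValues A k := by
  have hprod : ∏ k, singularValues A k ≠ 0 := by
    rw [prod_singularValues]
    exact abs_ne_zero.2 ((isUnit_iff_isUnit_det A).1 hA).ne_zero
  exact (singularValues_nonneg A k).lt_of_ne' (prod_ne_zero_iff.1 hprod k (mem_univ k))

theorem charpoly_conjTranspose_mul_self_inv {A : Matrix (Fin n) (Fin n) ℝ} (hA : IsUnit A) :
    (A⁻¹ᴴ * A⁻¹).charpoly =
      ∏ k, (X - C ((isHermitian_conjTranspose_mul_self A).eigenvalues k)⁻¹) := by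
  have hAA : IsUnit (Aᴴ * A) := (A.isUnit_conjTranspose.2 hA).mul hA
  rw [charpoly_mul_comm, conjTranspose_nonsing_inv, ← Matrix.mul_inv_rev,
    nonsing_inv_eq_ringInverse, ← cfc_ringInverse_id (R := ℝ) _ hAA
      (isHermitian_conjTranspose_mul_self A).isSelfAdjoint]
  exact (isHermitian_conjTranspose_mul_self A).charpoly_cfc_eq _

theorem map_singularValues_inv {A : Matrix (Fin n) (Fin n) ℝ} (hA : IsUnit A) :
    univ.val.map (singularValues A⁻¹) = univ.val.map fun k ↦ (singularValues A k)⁻¹ := by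
  have h := congrArg (Multiset.map Real.sqrt ∘ roots) (charpoly_conjTranspose_mul_self_inv hA)
  rw [Function.comp_apply, (isHermitian_conjTranspose_mul_self A⁻¹).roots_charpoly_eq_eigenvalues,
    Function.comp_apply, roots_prod _ _ (prod_ne_zero_iff.2 fun k _ ↦ X_sub_C_ne_zero _)] at h
  simp only [Multiset.map_map, Function.comp_def, RCLike.ofReal_real_eq_id, id,
    roots_X_sub_C, Multiset.bind_singleton, Real.sqrt_inv] at h
  exact h

theorem sum_comp_singularValues_inv {A : Matrix (Fin n) (Fin n) ℝ} (hA : IsUnit A) (f : ℝ → ℝ) :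
    ∑ k, f (singularValues A⁻¹ k) = ∑ k, f (singularValues A k)⁻¹ := by
  rw [sum_eq_multiset_sum, sum_eq_multiset_sum, ← Function.comp_def f, ← Multiset.map_map f,
    map_singularValues_inv hA, Multiset.map_map]
  rfl

theorem stmt_12 (n : ℕ) (hn : 2 ≤ n) (M : Matrix (Fin n) (Fin n) ℝ) (hM : IsUnit M)
    (q : ℝ) (hq : q = 2 / ((n : ℝ) - 1)) :
    schattenNorm q M⁻¹ ≤ schattenNorm 2 M ^ ((n : ℕ) - 1 : ℕ) / |M.det| := by
  have hq_pos : 0 < q := hq ▸ div_pos two_pos (by rw [sub_pos]; exact_mod_cast hn)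
  have hσ := singularValues_pos hM
  set S := ∑ k, singularValues M k ^ (2 : ℝ)
  set P := ∏ k, singularValues M k
  have hS : 0 ≤ S := sum_nonneg fun k _ ↦ Real.rpow_nonneg (hσ k).le _
  have hP : 0 < P := prod_pos fun k _ ↦ hσ k
  have hsum : ∑ k, singularValues M⁻¹ k ^ q ≤ S / P ^ q := by
    have := Real.sum_inv_rpow_le_sum_sq_div_prod_rpow hσ (by rw [Fintype.card_fin]; omega)
    simpa only [sum_comp_singularValues_inv hM (· ^ q), Fintype.card_fin, ← hq, S, Real.rpow_two]
      using this
  calc schattenNorm q M⁻¹ ≤ (1 / n * (S / P ^ q)) ^ (1 / q) := by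
        unfold schattenNorm
        gcongr
        exact mul_nonneg (by positivity)
          (sum_nonneg fun k _ ↦ Real.rpow_nonneg (singularValues_nonneg _ k) _)
    _ = (1 / n * S) ^ (1 / q) / P := by
        rw [mul_div_assoc', Real.div_rpow (by positivity) (by positivity), ← Real.rpow_mul hP.le,
          mul_one_div_cancel hq_pos.ne', Real.rpow_one]
    _ = schattenNorm 2 M ^ ((n : ℕ) - 1 : ℕ) / |M.det| := by
        rw [← prod_singularValues, schattenNorm, ← Real.rpow_natCast,
          ← Real.rpow_mul (by positivity), hq, Nat.cast_sub (by omega), Nat.cast_one]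
        congr 2
        field_simp
end

section
/- Let σ₁,…,σ_n > 0 and q = 2/(n-1) with n ≥ 2. Then (Π_j σ_j)·((1/n)·Σ_k σ_k^{-q})^{1/q} ≤ ((1/n)·Σ_k σ_k²)^{(n-1)/2}. -/
/-!
Write `P = ∏ σ_j` and `q = 2/(n-1)`. For each `k`, `P^q σ_k^{-q} = ∏_{j ≠ k} (σ_j²)^{1/(n-1)}`,
which by AM-GM is at most the mean of the `σ_j²` over `j ≠ k`. Summing over `k` counts every
`σ_j²` exactly `n - 1` times, so `P^q Σ_k σ_k^{-q} ≤ Σ_k σ_k²`; dividing by `n` and raising to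
the power `1/q = (n-1)/2` gives the inequality.
-/

open Finset

theorem Finset.sum_sum_erase {ι M : Type*} [AddCommMonoid M] [DecidableEq ι] (s : Finset ι)
    (f : ι → M) : ∑ k ∈ s, ∑ j ∈ s.erase k, f j = (#s - 1) • ∑ j ∈ s, f j := by
  rw [Finset.sum_comm' (t' := s) (s' := fun j => s.erase j) (by aesop), Finset.smul_sum]
  refine Finset.sum_congr rfl fun j hj => ?_
  rw [Finset.sum_const, Finset.card_erase_of_mem hj]

theorem Real.prod_rpow_inv_card_le_sum_div_card_s13 {ι : Type*} {s : Finset ι} (hs : s.Nonempty)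
    (z : ι → ℝ) (hz : ∀ i ∈ s, 0 ≤ z i) :
    ∏ i ∈ s, z i ^ (#s : ℝ)⁻¹ ≤ (∑ i ∈ s, z i) / #s := by
  have hcard : (#s : ℝ) ≠ 0 := by exact_mod_cast hs.card_pos.ne'
  have := Real.geom_mean_le_arith_mean_weighted s (fun _ => (#s : ℝ)⁻¹) z
    (fun _ _ => by positivity) (by simp [hcard]) hz
  rwa [← Finset.mul_sum, inv_mul_eq_div] at this

theorem Real.prod_rpow_mul_rpow_neg_of_mem {ι : Type*} [DecidableEq ι] {s : Finset ι} {x : ι → ℝ}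
    (hx : ∀ i ∈ s, 0 < x i) {k : ι} (hk : k ∈ s) (r : ℝ) :
    (∏ i ∈ s, x i) ^ r * x k ^ (-r) = ∏ i ∈ s.erase k, x i ^ r := by
  rw [← Finset.mul_prod_erase s x hk, Real.mul_rpow (hx k hk).le
    (Finset.prod_nonneg fun i hi => (hx i (Finset.mem_of_mem_erase hi)).le),
    Real.finsetProd_rpow _ _ fun i hi => (hx i (Finset.mem_of_mem_erase hi)).le,
    mul_right_comm, ← Real.rpow_add (hx k hk), add_neg_cancel, Real.rpow_zero, one_mul]

theorem Real.prod_rpow_mul_rpow_neg_le_sum_erase {ι : Type*} [DecidableEq ι] {s : Finset ι}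
    (hs : 2 ≤ #s) {x : ι → ℝ} (hx : ∀ i ∈ s, 0 < x i) {k : ι} (hk : k ∈ s) :
    (∏ i ∈ s, x i) ^ (2 / ((#s : ℝ) - 1)) * x k ^ (-(2 / ((#s : ℝ) - 1)))
      ≤ (∑ i ∈ s.erase k, x i ^ 2) / ((#s : ℝ) - 1) := by
  have hcard : (#(s.erase k) : ℝ) = #s - 1 := by
    rw [Finset.card_erase_of_mem hk, Nat.cast_sub (by omega), Nat.cast_one]
  have hne : (s.erase k).Nonempty := Finset.card_pos.mp (by rw [Finset.card_erase_of_mem hk]; omega)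
  rw [Real.prod_rpow_mul_rpow_neg_of_mem hx hk, ← hcard]
  convert Real.prod_rpow_inv_card_le_sum_div_card_s13 hne (fun i => x i ^ 2) (fun _ _ => by positivity)
    using 2 with i hi
  rw [← Real.rpow_natCast, ← Real.rpow_mul (hx i (Finset.mem_of_mem_erase hi)).le]
  ring_nf

theorem Real.prod_rpow_mul_sum_rpow_neg_le_sum_sq {ι : Type*} {s : Finset ι} (hs : 2 ≤ #s)
    {x : ι → ℝ} (hx : ∀ i ∈ s, 0 < x i) :
    (∏ i ∈ s, x i) ^ (2 / ((#s : ℝ) - 1)) * ∑ k ∈ s, x k ^ (-(2 / ((#s : ℝ) - 1)))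
      ≤ ∑ i ∈ s, x i ^ 2 := by
  classical
  have hcard : (0 : ℝ) < #s - 1 := by
    have : (2 : ℝ) ≤ #s := by exact_mod_cast hs
    linarith
  calc _ = ∑ k ∈ s, (∏ i ∈ s, x i) ^ (2 / ((#s : ℝ) - 1)) * x k ^ (-(2 / ((#s : ℝ) - 1))) :=
        Finset.mul_sum _ _ _
    _ ≤ ∑ k ∈ s, (∑ i ∈ s.erase k, x i ^ 2) / ((#s : ℝ) - 1) :=
        Finset.sum_le_sum fun k hk => Real.prod_rpow_mul_rpow_neg_le_sum_erase hs hx hk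
    _ = ∑ i ∈ s, x i ^ 2 := by
        rw [← Finset.sum_div, Finset.sum_sum_erase, nsmul_eq_mul, Nat.cast_sub (by omega),
          Nat.cast_one, mul_div_cancel_left₀ _ hcard.ne']

theorem stmt_13 (n : ℕ) (hn : 2 ≤ n) (σ : Fin n → ℝ) (hσ : ∀ k, 0 < σ k)
    (q : ℝ) (hq : q = 2 / ((n : ℝ) - 1)) :
    (∏ j, σ j) * ((1 / (n : ℝ)) * ∑ k, σ k ^ (-q)) ^ (1 / q)
      ≤ ((1 / (n : ℝ)) * ∑ k, σ k ^ 2) ^ (((n : ℝ) - 1) / 2) := by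
  have hq0 : 0 < q := by
    rw [hq]
    have : (2 : ℝ) ≤ n := by exact_mod_cast hn
    exact div_pos two_pos (by linarith)
  have hprod : 0 < ∏ j, σ j := Finset.prod_pos fun j _ => hσ j
  have hmean : 0 ≤ (1 / (n : ℝ)) * ∑ k, σ k ^ (-q) :=
    mul_nonneg (by positivity) (Finset.sum_nonneg fun k _ => (Real.rpow_pos_of_pos (hσ k) _).le)
  have key : (∏ j, σ j) ^ q * ∑ k, σ k ^ (-q) ≤ ∑ k, σ k ^ 2 := by
    simpa [← hq] using
      Real.prod_rpow_mul_sum_rpow_neg_le_sum_sq (s := Finset.univ) (by simpa using hn)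
        fun i _ => hσ i
  calc (∏ j, σ j) * ((1 / (n : ℝ)) * ∑ k, σ k ^ (-q)) ^ (1 / q)
      = ((∏ j, σ j) ^ q * ((1 / (n : ℝ)) * ∑ k, σ k ^ (-q))) ^ (1 / q) := by
        rw [Real.mul_rpow (by positivity) hmean, ← Real.rpow_mul hprod.le,
          mul_one_div_cancel hq0.ne', Real.rpow_one]
    _ ≤ ((1 / (n : ℝ)) * ∑ k, σ k ^ 2) ^ (1 / q) := by
        refine Real.rpow_le_rpow (mul_nonneg (by positivity) hmean) ?_ (by positivity)
        rw [mul_left_comm]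
        gcongr
    _ = ((1 / (n : ℝ)) * ∑ k, σ k ^ 2) ^ (((n : ℝ) - 1) / 2) := by
        rw [hq, one_div_div]
end

section
/- Let K ⊂ ℝⁿ (n ≥ 2) be a compact set with positive volume and irreducible isometry group, and let M be an invertible n×n real matrix. Then I(MK) = |det M| · ‖M‖_{2,n}² · I(K), where I denotes the second moment of mass about the centroid and ‖M‖_{2,n}² = (1/n)·tr(M Mᵀ). -/
open MeasureTheory Matrix

/-- Centroid of a set `K` of positive finite volume. -/
noncomputable def centroid (n : ℕ) (K : Set (Fin n → ℝ)) : Fin n → ℝ :=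
  (volume K).toReal⁻¹ • ∫ x in K, x ∂volume

/-- Second moment of mass about the centroid. -/
noncomputable def momentOfInertia (n : ℕ) (K : Set (Fin n → ℝ)) : ℝ :=
  ∫ x in K, ∑ i, (x i - centroid n K i) ^ 2 ∂volume

/-!
Write `Σ(K)` for the second-moment matrix of `K` about its centroid, so that `I(K) = tr Σ(K)`.
A linear change of variables gives `Σ(MK) = |det M| • M Σ(K) Mᵀ`, because the centroid moves
linearly with `K`. Applied to a symmetry `U` of `K` this says that `Σ(K)` commutes with `U`;
an eigenspace of the symmetric matrix `Σ(K)` is then invariant under the irreducible symmetry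
group, so `Σ(K) = λ • 1` (Schur's lemma). Hence
`I(MK) = |det M| λ tr(M Mᵀ)` while `I(K) = λ n`.
-/

section

variable {ι : Type*} [Fintype ι]

noncomputable def secondMomentMatrix (K : Set (ι → ℝ)) (c : ι → ℝ) : Matrix ι ι ℝ :=
  fun i j => ∫ x in K, (x i - c i) * (x j - c j)

theorem isHermitian_secondMomentMatrix (K : Set (ι → ℝ)) (c : ι → ℝ) :
    (secondMomentMatrix K c).IsHermitian := by
  ext i j
  simp only [conjTranspose_apply, star_trivial, secondMomentMatrix, mul_comm]

variable [DecidableEq ι]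

theorem Matrix.IsHermitian.exists_eq_smul_one_of_forall_commute [Nonempty ι]
    {A : Matrix ι ι ℝ} (hA : A.IsHermitian) {S : Set (Matrix ι ι ℝ)}
    (hS : ∀ v ≠ 0, Submodule.span ℝ ((· *ᵥ v) '' S) = ⊤)
    (hAS : ∀ U ∈ S, Commute A U) :
    ∃ c : ℝ, A = c • 1 := by
  obtain ⟨i⟩ := ‹Nonempty ι›
  set v : ι → ℝ := ⇑(hA.eigenvectorBasis i)
  have hv : A *ᵥ v = hA.eigenvalues i • v := hA.mulVec_eigenvectorBasis i
  have hv0 : v ≠ 0 := (WithLp.ofLp_eq_zero 2).ne.2 <| hA.eigenvectorBasis.orthonormal.ne_zero i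
  have hspan : Submodule.span ℝ ((· *ᵥ v) '' S) ≤
      Module.End.eigenspace (toLin' A) (hA.eigenvalues i) := by
    rw [Submodule.span_le]
    rintro _ ⟨U, hU, rfl⟩
    rw [SetLike.mem_coe, Module.End.mem_eigenspace_iff, toLin'_apply, mulVec_mulVec,
      (hAS U hU).eq, ← mulVec_mulVec, hv, mulVec_smul]
  rw [hS v hv0, top_le_iff] at hspan
  refine ⟨hA.eigenvalues i, mulVec_injective (funext fun w => ?_)⟩
  rw [smul_mulVec, one_mulVec, ← toLin'_apply, ← Module.End.mem_eigenspace_iff, hspan]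
  exact Submodule.mem_top

theorem setIntegral_image_mulVec {K : Set (ι → ℝ)} (hK : MeasurableSet K)
    {M : Matrix ι ι ℝ} (hM : IsUnit M) {F : Type*} [NormedAddCommGroup F] [NormedSpace ℝ F]
    (g : (ι → ℝ) → F) :
    ∫ y in M.mulVec '' K, g y = |M.det| • ∫ x in K, g (M *ᵥ x) := by
  let L : (ι → ℝ) →L[ℝ] ι → ℝ := LinearMap.toContinuousLinearMap (toLin' M)
  have hdet : L.det = M.det := LinearMap.det_toLin' M
  rw [← integral_smul, ← hdet]
  exact integral_image_eq_integral_abs_det_fderiv_smul volume hK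
    (fun x _ => L.hasFDerivAt.hasFDerivWithinAt) (mulVec_injective_iff_isUnit.2 hM).injOn g

theorem volume_image_mulVec (K : Set (ι → ℝ)) (M : Matrix ι ι ℝ) :
    volume (M.mulVec '' K) = ENNReal.ofReal |M.det| * volume K := by
  rw [← LinearMap.det_toLin' M]
  exact Measure.addHaar_image_linearMap volume (toLin' M) K

theorem secondMomentMatrix_image_mulVec {K : Set (ι → ℝ)} (hK : IsCompact K)
    {M : Matrix ι ι ℝ} (hM : IsUnit M) (c : ι → ℝ) :
    secondMomentMatrix (M.mulVec '' K) (M *ᵥ c) =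
      |M.det| • (M * secondMomentMatrix K c * Mᵀ) := by
  have hint : ∀ k l, IntegrableOn (fun x : ι → ℝ => (x k - c k) * (x l - c l)) K :=
    fun k l => (by fun_prop : Continuous _).continuousOn.integrableOn_compact hK
  have hexpand : ∀ i j x, ((M *ᵥ x) i - (M *ᵥ c) i) * ((M *ᵥ x) j - (M *ᵥ c) j)
      = ∑ k, ∑ l, M i k * M j l * ((x k - c k) * (x l - c l)) := by
    intro i j x
    simp only [mulVec, dotProduct, ← Finset.sum_sub_distrib, ← mul_sub, Finset.sum_mul_sum]
    exact Finset.sum_congr rfl fun k _ => Finset.sum_congr rfl fun l _ => by ring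
  ext i j
  simp only [secondMomentMatrix, Matrix.smul_apply, mul_apply, transpose_apply, smul_eq_mul,
    setIntegral_image_mulVec hK.measurableSet hM, hexpand]
  congr 1
  simp only [Finset.sum_mul]
  rw [Finset.sum_comm, integral_finsetSum _ fun k _ =>
    integrable_finsetSum _ fun l _ => (hint k l).const_mul _]
  refine Finset.sum_congr rfl fun k _ => ?_
  rw [integral_finsetSum _ fun l _ => (hint k l).const_mul _]
  exact Finset.sum_congr rfl fun l _ => by rw [integral_const_mul]; ring

theorem abs_det_eq_one_of_transpose_mul_self {U : Matrix ι ι ℝ} (hU : Uᵀ * U = 1) :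
    |U.det| = 1 := by
  have h : U.det * U.det = 1 := by simpa using congrArg det hU
  have h' : |U.det| * |U.det| = 1 := by rw [← abs_mul, h, abs_one]
  exact (mul_self_eq_one_iff.1 h').resolve_right (by linarith [abs_nonneg U.det])

end

variable {n : ℕ}

theorem centroid_image_mulVec {K : Set (Fin n → ℝ)} (hK : IsCompact K)
    {M : Matrix (Fin n) (Fin n) ℝ} (hM : IsUnit M) :
    centroid n (M.mulVec '' K) = M *ᵥ centroid n K := by
  have hdet : |M.det| ≠ 0 := abs_ne_zero.2 ((isUnit_iff_isUnit_det M).1 hM).ne_zero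
  have hint : ∫ x in K, M *ᵥ x = M *ᵥ ∫ x in K, x :=
    (LinearMap.toContinuousLinearMap (toLin' M)).integral_comp_comm
      (continuous_id.continuousOn.integrableOn_compact hK)
  rw [centroid, centroid, volume_image_mulVec, setIntegral_image_mulVec hK.measurableSet hM,
    hint, ENNReal.toReal_mul, ENNReal.toReal_ofReal (abs_nonneg _), mulVec_smul, smul_smul,
    mul_inv, mul_comm |M.det|⁻¹, mul_assoc, inv_mul_cancel₀ hdet, mul_one]

theorem momentOfInertia_eq_trace {K : Set (Fin n → ℝ)} (hK : IsCompact K) :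
    momentOfInertia n K = (secondMomentMatrix K (centroid n K)).trace := by
  rw [momentOfInertia, integral_finsetSum _ fun i _ =>
    (by fun_prop : Continuous _).continuousOn.integrableOn_compact hK]
  simp only [trace, diag, secondMomentMatrix, sq]

theorem commute_secondMomentMatrix_centroid {K : Set (Fin n → ℝ)} (hK : IsCompact K)
    {U : Matrix (Fin n) (Fin n) ℝ} (hU : Uᵀ * U = 1) (hUK : U.mulVec '' K = K) :
    Commute (secondMomentMatrix K (centroid n K)) U := by
  have hUunit : IsUnit U := (isUnit_iff_isUnit_det U).2 (isUnit_det_of_left_inverse hU)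
  have h := secondMomentMatrix_image_mulVec hK hUunit (centroid n K)
  rw [← centroid_image_mulVec hK hUunit, hUK, abs_det_eq_one_of_transpose_mul_self hU,
    one_smul] at h
  calc secondMomentMatrix K (centroid n K) * U
      = U * secondMomentMatrix K (centroid n K) * (Uᵀ * U) := by
        rw [← mul_assoc, ← h]
    _ = U * secondMomentMatrix K (centroid n K) := by rw [hU, mul_one]

theorem stmt_15_general (n : ℕ) (hn : 2 ≤ n) (K : Set (Fin n → ℝ))
    (hK : IsCompact K)
    (hirred : ∀ x : Fin n → ℝ, x ≠ 0 →
      Submodule.span ℝ {y : Fin n → ℝ |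
        ∃ U : Matrix (Fin n) (Fin n) ℝ, Uᵀ * U = 1 ∧ U.mulVec '' K = K ∧ y = U.mulVec x} = ⊤)
    (M : Matrix (Fin n) (Fin n) ℝ) (hM : IsUnit M) :
    momentOfInertia n (M.mulVec '' K)
      = |M.det| * ((M * Mᵀ).trace / n) * momentOfInertia n K := by
  have : Nonempty (Fin n) := ⟨⟨0, by omega⟩⟩
  obtain ⟨c, hc⟩ :=
    (isHermitian_secondMomentMatrix K (centroid n K)).exists_eq_smul_one_of_forall_commute
      (S := {U | Uᵀ * U = 1 ∧ U.mulVec '' K = K})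
      (fun v hv => by convert hirred v hv using 2; ext y; simp [eq_comm, and_assoc])
      (fun U hU => commute_secondMomentMatrix_centroid hK hU.1 hU.2)
  rw [momentOfInertia_eq_trace (hK.image (by fun_prop)), momentOfInertia_eq_trace hK,
    centroid_image_mulVec hK hM, secondMomentMatrix_image_mulVec hK hM, hc]
  simp only [Matrix.mul_smul, Matrix.mul_one, Matrix.smul_mul, trace_smul, trace_one,
    Fintype.card_fin, smul_eq_mul]
  field_simp

theorem stmt_15 (n : ℕ) (hn : 2 ≤ n) (K : Set (Fin n → ℝ))
    (hK : IsCompact K) (hpos : 0 < volume K)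
    (hirred : ∀ x : Fin n → ℝ, x ≠ 0 →
      Submodule.span ℝ {y : Fin n → ℝ |
        ∃ U : Matrix (Fin n) (Fin n) ℝ, Uᵀ * U = 1 ∧ U.mulVec '' K = K ∧ y = U.mulVec x} = ⊤)
    (M : Matrix (Fin n) (Fin n) ℝ) (hM : IsUnit M) :
    momentOfInertia n (M.mulVec '' K)
      = |M.det| * ((M * Mᵀ).trace / n) * momentOfInertia n K :=
  stmt_15_general n hn K hK hirred M hM
end

section
/- If a Borel probability measure μ on ℝⁿ gives measure zero to the set {(x,y) : x_j ≠ y_j and x_k ≠ y_k} under μ × μ (for fixed indices j ≠ k), then μ has full measure on some hyperplane {x : x_j = c} or {x : x_k = c} for some constant c. -/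
/-!
By Fubini, pick `y` such that `μ`-almost every `x` agrees with `y` in coordinate `j` or in coordinate `k`.
If a point `x` agrees with `y` in `j` but not in `k`, and `z` agrees with `y` in `k` but not in `j`,
then `x` and `z` differ in both coordinates; so these two sets span a null rectangle and one of
them is null, which puts almost all of `μ` on one of the two hyperplanes through `y`.
-/

open MeasureTheory Filter

variable {α β γ : Type*} [MeasurableSpace α] {μ : Measure α}

theorem ae_or_ae_of_measure_mul_measure_eq_zero {p q : α → Prop}
    (hpq : ∀ᵐ x ∂μ, p x ∨ q x) (h : μ {x | p x ∧ ¬q x} * μ {x | q x ∧ ¬p x} = 0) :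
    (∀ᵐ x ∂μ, p x) ∨ ∀ᵐ x ∂μ, q x := by
  rcases mul_eq_zero.1 h with h | h
  · right
    filter_upwards [hpq, measure_eq_zero_iff_ae_notMem.1 h] with x hx hx'
    tauto
  · left
    filter_upwards [hpq, measure_eq_zero_iff_ae_notMem.1 h] with x hx hx'
    tauto

theorem exists_ae_eq_or_ae_eq_of_prod_null [SFinite μ] [NeZero μ] (f : α → β) (g : α → γ)
    (h : μ.prod μ {p | f p.1 ≠ f p.2 ∧ g p.1 ≠ g p.2} = 0) :
    ∃ y, (∀ᵐ x ∂μ, f x = f y) ∨ ∀ᵐ x ∂μ, g x = g y := by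
  obtain ⟨y, hy⟩ := (Measure.measure_ae_null_of_prod_null h).exists
  refine ⟨y, ae_or_ae_of_measure_mul_measure_eq_zero ?_ ?_⟩
  · filter_upwards [measure_eq_zero_iff_ae_notMem.1 hy] with x hx
    simp only [Set.mem_preimage, Set.mem_ofPred_eq, not_and_or, not_not] at hx
    exact hx.imp Eq.symm Eq.symm
  · rw [← Measure.prod_prod]
    refine measure_mono_null ?_ h
    rintro ⟨x, z⟩ ⟨⟨hfx, hgx⟩, hgz, hfz⟩
    exact ⟨fun hfxz => hfz (hfxz ▸ hfx), fun hgxz => hgx (hgxz ▸ hgz)⟩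

theorem prob_eq_one_of_mem_ae [IsProbabilityMeasure μ] {s : Set α} (hs : s ∈ ae μ) : μ s = 1 :=
  (measure_congr (eventuallyEq_univ.2 hs)).trans measure_univ

theorem stmt_16_general (n : ℕ) (μ : Measure (Fin n → ℝ)) [IsProbabilityMeasure μ]
    (j k : Fin n)
    (h : (μ.prod μ) {p : (Fin n → ℝ) × (Fin n → ℝ) | p.1 j ≠ p.2 j ∧ p.1 k ≠ p.2 k} = 0) :
    ∃ c : ℝ, μ {x | x j = c} = 1 ∨ μ {x | x k = c} = 1 := by
  obtain ⟨y, hy | hy⟩ := exists_ae_eq_or_ae_eq_of_prod_null (μ := μ) (· j) (· k) h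
  · exact ⟨y j, .inl (prob_eq_one_of_mem_ae hy)⟩
  · exact ⟨y k, .inr (prob_eq_one_of_mem_ae hy)⟩

theorem stmt_16 (n : ℕ) (μ : Measure (Fin n → ℝ)) [IsProbabilityMeasure μ]
    (j k : Fin n) (hjk : j ≠ k)
    (h : (μ.prod μ) {p : (Fin n → ℝ) × (Fin n → ℝ) | p.1 j ≠ p.2 j ∧ p.1 k ≠ p.2 k} = 0) :
    ∃ c : ℝ, μ {x | x j = c} = 1 ∨ μ {x | x k = c} = 1 :=
  stmt_16_general n μ j k h
end

section
/- Let μ be a Borel probability measure on ℝⁿ invariant under a compact irreducible group 𝒰 of orthogonal matrices. If μ has full measure on some affine hyperplane H = {x : xᵀy = s} (y ≠ 0), then μ is a Dirac point mass. -/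
/-! Since `(Uᵀ x) ⬝ᵥ y = x ⬝ᵥ (U y)`, invariance under `Uᵀ` carries full measure from the
hyperplane `x ⬝ᵥ y = s` to `x ⬝ᵥ (U y) = s`. By irreducibility finitely many of the vectors `U y`
span `ℝⁿ`, so `μ` is concentrated on the intersection of finitely many such hyperplanes, which is
a single point because a vector is determined by its dot products with a spanning family. -/

open MeasureTheory Matrix Submodule

theorem Matrix.eq_of_forall_dotProduct_eq_of_span_eq_top {R ι : Type*} [CommSemiring R] [Fintype ι]
    [DecidableEq ι] {t : Set (ι → R)} (ht : span R t = ⊤) {x x' : ι → R}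
    (h : ∀ v ∈ t, x ⬝ᵥ v = x' ⬝ᵥ v) : x = x' :=
  (dotProductEquiv R ι).injective (LinearMap.ext_on ht h)

theorem MeasureTheory.exists_measure_singleton_eq_one_of_ae_dotProduct_eq {ι : Type*} [Fintype ι]
    {μ : Measure (ι → ℝ)} [IsProbabilityMeasure μ] {t : Set (ι → ℝ)} (htc : t.Countable)
    (ht : span ℝ t = ⊤) (c : (ι → ℝ) → ℝ) (h : ∀ v ∈ t, ∀ᵐ x ∂μ, x ⬝ᵥ v = c v) :
    ∃ z, μ {z} = 1 := by
  classical
  have hall : ∀ᵐ x ∂μ, ∀ v ∈ t, x ⬝ᵥ v = c v := (ae_ball_iff htc).2 h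
  obtain ⟨z, hz⟩ := hall.exists
  have hae : ∀ᵐ x ∂μ, x = z := hall.mono fun x hx ↦
    eq_of_forall_dotProduct_eq_of_span_eq_top ht fun v hv ↦ (hx v hv).trans (hz v hv).symm
  exact ⟨z, (prob_compl_eq_zero_iff (measurableSet_singleton z)).1 (ae_iff.1 hae)⟩

theorem MeasureTheory.ae_dotProduct_transpose_mulVec_eq {ι : Type*} [Fintype ι]
    {μ : Measure (ι → ℝ)} {A : Matrix ι ι ℝ} (hA : μ.map (A *ᵥ ·) = μ) {y : ι → ℝ} {s : ℝ}
    (h : ∀ᵐ x ∂μ, x ⬝ᵥ y = s) : ∀ᵐ x ∂μ, x ⬝ᵥ (Aᵀ *ᵥ y) = s := by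
  rw [← hA] at h
  filter_upwards [ae_of_ae_map (Continuous.aemeasurable (by fun_prop)) h] with x hx
  rwa [dotProduct_mulVec, vecMul_transpose]

theorem stmt_17_general (n : ℕ) (μ : Measure (Fin n → ℝ)) [IsProbabilityMeasure μ]
    (𝒰 : Set (Matrix (Fin n) (Fin n) ℝ))
    (hinvmem : ∀ U ∈ 𝒰, Uᵀ ∈ 𝒰)
    (hirred : ∀ x : Fin n → ℝ, x ≠ 0 →
      Submodule.span ℝ {y : Fin n → ℝ | ∃ U ∈ 𝒰, y = U.mulVec x} = ⊤)
    (hinv : ∀ U ∈ 𝒰, Measure.map (fun x => U.mulVec x) μ = μ)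
    (y : Fin n → ℝ) (hy : y ≠ 0) (s : ℝ)
    (hfull : μ {x | ∑ i, x i * y i = s} = 1) :
    ∃ z : Fin n → ℝ, μ {z} = 1 := by
  obtain ⟨t, hts, -, hspan, -⟩ :=
    exists_finset_span_eq_linearIndepOn ℝ {w : Fin n → ℝ | ∃ U ∈ 𝒰, w = U *ᵥ y}
  have hae : ∀ᵐ x ∂μ, x ⬝ᵥ y = s :=
    (ae_iff_prob_eq_one (by fun_prop)).2 hfull
  refine exists_measure_singleton_eq_one_of_ae_dotProduct_eq t.countable_toSet
    (hspan.trans (hirred y hy)) (fun _ ↦ s) fun v hv ↦ ?_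
  obtain ⟨U, hU, rfl⟩ := hts hv
  simpa using ae_dotProduct_transpose_mulVec_eq (hinv _ (hinvmem U hU)) hae

theorem stmt_17 (n : ℕ) (μ : Measure (Fin n → ℝ)) [IsProbabilityMeasure μ]
    (𝒰 : Set (Matrix (Fin n) (Fin n) ℝ))
    (horth : ∀ U ∈ 𝒰, Uᵀ * U = 1)
    (hone : (1 : Matrix (Fin n) (Fin n) ℝ) ∈ 𝒰)
    (hmul : ∀ U ∈ 𝒰, ∀ V ∈ 𝒰, U * V ∈ 𝒰)
    (hinvmem : ∀ U ∈ 𝒰, Uᵀ ∈ 𝒰)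
    (hcompact : IsCompact 𝒰)
    (hirred : ∀ x : Fin n → ℝ, x ≠ 0 →
      Submodule.span ℝ {y : Fin n → ℝ | ∃ U ∈ 𝒰, y = U.mulVec x} = ⊤)
    (hinv : ∀ U ∈ 𝒰, Measure.map (fun x => U.mulVec x) μ = μ)
    (y : Fin n → ℝ) (hy : y ≠ 0) (s : ℝ)
    (hfull : μ {x | ∑ i, x i * y i = s} = 1) :
    ∃ z : Fin n → ℝ, μ {z} = 1 :=
  stmt_17_general n μ 𝒰 hinvmem hirred hinv y hy s hfull
end
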